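/- Fix complex numbers A, B, C, D and ε, ρ ∈ {0,1}. (1) There exist a 6-dimensional real Lie algebra g, an ℝ-linear map J : g → g with J∘J = −id, and a basis ω¹, ω², ω³ of the (1,0)-forms of (g,J) satisfying dω¹ = 0, dω² = ε·(ω¹∧conj(ω¹)), dω³ = ρ·(ω¹∧ω²) + (1−ε)·A·(ω¹∧conj(ω¹)) + B·(ω¹∧conj(ω²)) + C·(ω²∧conj(ω¹)) + (1−ε)·D·(ω²∧conj(ω²)). (2) Moreover, for every 6-dimensional real Lie algebra g and ℝ-linear J with J∘J = −id admitting such a basis, the Lie algebra g is nilpotent (of nilpotency step at most 3) and J is an integrable complex structure on g which is nilpotent. -/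

import Mathlib

noncomputable section

open Complex

/-- An integrable complex structure on a real Lie algebra: an ℝ-linear map with
`J ∘ J = -id` satisfying the Nijenhuis integrability condition. -/
def IsComplexStructure {g : Type*} [LieRing g] [LieAlgebra ℝ g] (J : g →ₗ[ℝ] g) : Prop :=
  (∀ x, J (J x) = -x) ∧
  (∀ x y : g, ⁅J x, J y⁆ = J ⁅J x, y⁆ + J ⁅x, J y⁆ + ⁅x, y⁆)

/-- A (1,0)-form of `(g, J)`. -/
def IsOneZero {g : Type*} [LieRing g] [LieAlgebra ℝ g] (J : g →ₗ[ℝ] g)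
    (ω : g →ₗ[ℝ] ℂ) : Prop :=
  ∀ x, ω (J x) = Complex.I * ω x

/-- `ω 0, ω 1, ω 2` is a basis of the space of (1,0)-forms of `(g, J)`. -/
def IsOneZeroBasis {g : Type*} [LieRing g] [LieAlgebra ℝ g] (J : g →ₗ[ℝ] g)
    (ω : Fin 3 → (g →ₗ[ℝ] ℂ)) : Prop :=
  (∀ k, IsOneZero J (ω k)) ∧ LinearIndependent ℂ ω ∧
  ∀ η : g →ₗ[ℝ] ℂ, IsOneZero J η → η ∈ Submodule.span ℂ (Set.range ω)

/-- Wedge product of two ℂ-valued 1-forms, evaluated at a pair of vectors. -/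
def wC {g : Type*} (α β : g → ℂ) (x y : g) : ℂ := α x * β y - α y * β x

/-- Wedge product of two ℝ-valued 1-forms, evaluated at a pair of vectors. -/
def wR {g : Type*} (α β : g → ℝ) (x y : g) : ℝ := α x * β y - α y * β x

/-- Pointwise complex conjugate of a ℂ-valued 1-form. -/
def cg {g : Type*} (α : g → ℂ) : g → ℂ := fun x => (starRingEnd ℂ) (α x)

/-- The ascending series of `g` adapted to `J`. -/
def ascSeries {g : Type*} [LieRing g] [LieAlgebra ℝ g] (J : g →ₗ[ℝ] g) : ℕ → Set g
  | 0 => {0}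
  | (l + 1) => {x | (∀ y, ⁅x, y⁆ ∈ ascSeries J l) ∧ (∀ y, ⁅J x, y⁆ ∈ ascSeries J l)}

/-- `J` is a nilpotent complex structure. -/
def IsNilpotentJ {g : Type*} [LieRing g] [LieAlgebra ℝ g] (J : g →ₗ[ℝ] g) : Prop :=
  ∃ l, ascSeries J l = Set.univ

/-- The descending (lower) central series of `g` as ℝ-submodules. -/
def lcs (g : Type*) [LieRing g] [LieAlgebra ℝ g] : ℕ → Submodule ℝ g
  | 0 => ⊤
  | (k + 1) => Submodule.span ℝ {z | ∃ x ∈ lcs g k, ∃ y : g, z = ⁅x, y⁆}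

/-- `g` is a nilpotent Lie algebra. -/
def IsNilpotentLA (g : Type*) [LieRing g] [LieAlgebra ℝ g] : Prop :=
  ∃ k, lcs g k = ⊥

/-- The center of `g`, as an ℝ-submodule. -/
def centerS (g : Type*) [LieRing g] [LieAlgebra ℝ g] : Submodule ℝ g where
  carrier := {x : g | ∀ y : g, ⁅x, y⁆ = 0}
  add_mem' := fun ha hb => fun y => by rw [add_lie, ha y, hb y, add_zero]
  zero_mem' := fun y => zero_lie y
  smul_mem' := fun c x hx => fun y => by rw [smul_lie, hx y, smul_zero]

/-- A Hermitian structure: an inner product compatible with `J`. -/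
def IsHermitian {g : Type*} [LieRing g] [LieAlgebra ℝ g] (J : g →ₗ[ℝ] g)
    (m : g →ₗ[ℝ] g →ₗ[ℝ] ℝ) : Prop :=
  (∀ x y, m x y = m y x) ∧ (∀ x, x ≠ 0 → 0 < m x x) ∧ (∀ x y, m (J x) (J y) = m x y)

/-- The fundamental 2-form `Ω(x,y) = ⟨Jx, y⟩`. -/
def fund {g : Type*} [LieRing g] [LieAlgebra ℝ g] (J : g →ₗ[ℝ] g)
    (m : g →ₗ[ℝ] g →ₗ[ℝ] ℝ) (x y : g) : ℝ := m (J x) y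

/-- Chevalley–Eilenberg differential of a 2-form. -/
def d2 {g : Type*} [LieRing g] [LieAlgebra ℝ g] (Ω : g → g → ℝ) (x y z : g) : ℝ :=
  -Ω ⁅x, y⁆ z + Ω ⁅x, z⁆ y - Ω ⁅y, z⁆ x

/-- Action of `J` on a 3-form: `(Jα)(x,y,z) = -α(Jx,Jy,Jz)`. -/
def J3 {g : Type*} [LieRing g] [LieAlgebra ℝ g] (J : g →ₗ[ℝ] g)
    (α : g → g → g → ℝ) (x y z : g) : ℝ := -α (J x) (J y) (J z)

/-- Chevalley–Eilenberg differential of a 3-form. -/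
def d3 {g : Type*} [LieRing g] [LieAlgebra ℝ g] (α : g → g → g → ℝ) (x y z w : g) : ℝ :=
  -α ⁅x, y⁆ z w + α ⁅x, z⁆ y w - α ⁅x, w⁆ y z
    - α ⁅y, z⁆ x w + α ⁅y, w⁆ x z - α ⁅z, w⁆ x y

/-- SKT (strong Kähler with torsion): `dΩ ≠ 0` and `d(J dΩ) = 0`. -/
def IsSKT {g : Type*} [LieRing g] [LieAlgebra ℝ g] (J : g →ₗ[ℝ] g)
    (m : g →ₗ[ℝ] g →ₗ[ℝ] ℝ) : Prop :=
  (∃ x y z, d2 (fund J m) x y z ≠ 0) ∧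
  (∀ x y z w, d3 (J3 J (d2 (fund J m))) x y z w = 0)

/-- The 4-form `Ω ∧ Ω`. -/
def sq4 {g : Type*} (Ω : g → g → ℝ) (x1 x2 x3 x4 : g) : ℝ :=
  2 * (Ω x1 x2 * Ω x3 x4 - Ω x1 x3 * Ω x2 x4 + Ω x1 x4 * Ω x2 x3)

/-- Chevalley–Eilenberg differential of a 4-form. -/
def d4 {g : Type*} [LieRing g] [LieAlgebra ℝ g] (α : g → g → g → g → ℝ)
    (x0 x1 x2 x3 x4 : g) : ℝ :=
  -α ⁅x0, x1⁆ x2 x3 x4 + α ⁅x0, x2⁆ x1 x3 x4 - α ⁅x0, x3⁆ x1 x2 x4 + α ⁅x0, x4⁆ x1 x2 x3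
    - α ⁅x1, x2⁆ x0 x3 x4 + α ⁅x1, x3⁆ x0 x2 x4 - α ⁅x1, x4⁆ x0 x2 x3
    - α ⁅x2, x3⁆ x0 x1 x4 + α ⁅x2, x4⁆ x0 x1 x3 - α ⁅x3, x4⁆ x0 x1 x2

/-- Balanced Hermitian structure in dimension 6: `d(Ω ∧ Ω) = 0`. -/
def IsBalanced {g : Type*} [LieRing g] [LieAlgebra ℝ g] (J : g →ₗ[ℝ] g)
    (m : g →ₗ[ℝ] g →ₗ[ℝ] ℝ) : Prop :=
  ∀ x0 x1 x2 x3 x4, d4 (sq4 (fund J m)) x0 x1 x2 x3 x4 = 0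

/-- Locally conformal Kähler: `dΩ = θ ∧ Ω` for a closed 1-form `θ`. -/
def IsLCK {g : Type*} [LieRing g] [LieAlgebra ℝ g] (J : g →ₗ[ℝ] g)
    (m : g →ₗ[ℝ] g →ₗ[ℝ] ℝ) : Prop :=
  ∃ θ : g →ₗ[ℝ] ℝ, (∀ x y : g, θ ⁅x, y⁆ = 0) ∧
    ∀ x y z, d2 (fund J m) x y z =
      θ x * fund J m y z - θ y * fund J m x z + θ z * fund J m x y

/-- `g` has structure equations `(0,0,0,0,0,0)` (abelian). -/
def IsH1 (g : Type*) [LieRing g] [LieAlgebra ℝ g] : Prop :=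
  ∃ α : Module.Basis (Fin 6) ℝ (Module.Dual ℝ g),
    ∀ i, ∀ x y : g, α i ⁅x, y⁆ = 0

/-- `g` has structure equations `(0,0,0,0,12,34)`. -/
def IsH2 (g : Type*) [LieRing g] [LieAlgebra ℝ g] : Prop :=
  ∃ α : Module.Basis (Fin 6) ℝ (Module.Dual ℝ g),
    (∀ i : Fin 6, i.val < 4 → ∀ x y : g, α i ⁅x, y⁆ = 0) ∧
    (∀ x y : g, -(α 4 ⁅x, y⁆) = wR (α 0) (α 1) x y) ∧
    (∀ x y : g, -(α 5 ⁅x, y⁆) = wR (α 2) (α 3) x y)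

/-- `g` has structure equations `(0,0,0,0,0,12+34)`. -/
def IsH3 (g : Type*) [LieRing g] [LieAlgebra ℝ g] : Prop :=
  ∃ α : Module.Basis (Fin 6) ℝ (Module.Dual ℝ g),
    (∀ i : Fin 6, i.val < 5 → ∀ x y : g, α i ⁅x, y⁆ = 0) ∧
    (∀ x y : g, -(α 5 ⁅x, y⁆) = wR (α 0) (α 1) x y + wR (α 2) (α 3) x y)

/-- `g` has structure equations `(0,0,0,0,12,14+23)`. -/
def IsH4 (g : Type*) [LieRing g] [LieAlgebra ℝ g] : Prop :=
  ∃ α : Module.Basis (Fin 6) ℝ (Module.Dual ℝ g),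
    (∀ i : Fin 6, i.val < 4 → ∀ x y : g, α i ⁅x, y⁆ = 0) ∧
    (∀ x y : g, -(α 4 ⁅x, y⁆) = wR (α 0) (α 1) x y) ∧
    (∀ x y : g, -(α 5 ⁅x, y⁆) = wR (α 0) (α 3) x y + wR (α 1) (α 2) x y)

/-- `g` has structure equations `(0,0,0,0,13+42,14+23)`. -/
def IsH5 (g : Type*) [LieRing g] [LieAlgebra ℝ g] : Prop :=
  ∃ α : Module.Basis (Fin 6) ℝ (Module.Dual ℝ g),
    (∀ i : Fin 6, i.val < 4 → ∀ x y : g, α i ⁅x, y⁆ = 0) ∧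
    (∀ x y : g, -(α 4 ⁅x, y⁆) = wR (α 0) (α 2) x y + wR (α 3) (α 1) x y) ∧
    (∀ x y : g, -(α 5 ⁅x, y⁆) = wR (α 0) (α 3) x y + wR (α 1) (α 2) x y)

/-- `g` has structure equations `(0,0,0,0,12,13)`. -/
def IsH6 (g : Type*) [LieRing g] [LieAlgebra ℝ g] : Prop :=
  ∃ α : Module.Basis (Fin 6) ℝ (Module.Dual ℝ g),
    (∀ i : Fin 6, i.val < 4 → ∀ x y : g, α i ⁅x, y⁆ = 0) ∧
    (∀ x y : g, -(α 4 ⁅x, y⁆) = wR (α 0) (α 1) x y) ∧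
    (∀ x y : g, -(α 5 ⁅x, y⁆) = wR (α 0) (α 2) x y)

/-- `g` has structure equations `(0,0,0,0,0,12)`. -/
def IsH8 (g : Type*) [LieRing g] [LieAlgebra ℝ g] : Prop :=
  ∃ α : Module.Basis (Fin 6) ℝ (Module.Dual ℝ g),
    (∀ i : Fin 6, i.val < 5 → ∀ x y : g, α i ⁅x, y⁆ = 0) ∧
    (∀ x y : g, -(α 5 ⁅x, y⁆) = wR (α 0) (α 1) x y)

/-- `g` has structure equations `(0,0,0,12,23,14-35)`. -/
def IsH19neg (g : Type*) [LieRing g] [LieAlgebra ℝ g] : Prop :=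
  ∃ α : Module.Basis (Fin 6) ℝ (Module.Dual ℝ g),
    (∀ i : Fin 6, i.val < 3 → ∀ x y : g, α i ⁅x, y⁆ = 0) ∧
    (∀ x y : g, -(α 3 ⁅x, y⁆) = wR (α 0) (α 1) x y) ∧
    (∀ x y : g, -(α 4 ⁅x, y⁆) = wR (α 1) (α 2) x y) ∧
    (∀ x y : g, -(α 5 ⁅x, y⁆) = wR (α 0) (α 3) x y - wR (α 2) (α 4) x y)

/-- `g` has structure equations `(0,0,12,13,23,14+25)`. -/
def IsH26pos (g : Type*) [LieRing g] [LieAlgebra ℝ g] : Prop :=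
  ∃ α : Module.Basis (Fin 6) ℝ (Module.Dual ℝ g),
    (∀ i : Fin 6, i.val < 2 → ∀ x y : g, α i ⁅x, y⁆ = 0) ∧
    (∀ x y : g, -(α 2 ⁅x, y⁆) = wR (α 0) (α 1) x y) ∧
    (∀ x y : g, -(α 3 ⁅x, y⁆) = wR (α 0) (α 2) x y) ∧
    (∀ x y : g, -(α 4 ⁅x, y⁆) = wR (α 1) (α 2) x y) ∧
    (∀ x y : g, -(α 5 ⁅x, y⁆) = wR (α 0) (α 3) x y + wR (α 1) (α 4) x y)


/-- A bundled real Lie algebra. -/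
structure BundledLieAlg where
  carrier : Type
  [lieRing : LieRing carrier]
  [lieAlg : LieAlgebra ℝ carrier]

attribute [instance] BundledLieAlg.lieRing BundledLieAlg.lieAlg

/-- The reduced nilpotent structure equations with parameters `A,B,C,D,ε,ρ`. -/
def NilpEqs {g : Type*} [LieRing g] [LieAlgebra ℝ g]
    (ω : Fin 3 → (g →ₗ[ℝ] ℂ)) (A B C D : ℂ) (ε ρ : ℝ) : Prop :=
  (∀ x y : g, ω 0 ⁅x, y⁆ = 0) ∧
  (∀ x y : g, -(ω 1 ⁅x, y⁆) = (ε : ℂ) * wC (ω 0) (cg (ω 0)) x y) ∧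
  (∀ x y : g, -(ω 2 ⁅x, y⁆) =
    (ρ : ℂ) * wC (ω 0) (ω 1) x y + ((1 - ε : ℝ) : ℂ) * A * wC (ω 0) (cg (ω 0)) x y
      + B * wC (ω 0) (cg (ω 1)) x y + C * wC (ω 1) (cg (ω 0)) x y
      + ((1 - ε : ℝ) : ℂ) * D * wC (ω 1) (cg (ω 1)) x y)

/- ===== Auxiliary construction and lemmas ===== -/

local notation "K" => starRingEnd ℂ

@[reducible] def MyG (_A _B _C _D : ℂ) (_e _r : ℝ) (_h : _e = 0 ∨ _e = 1) : Type := Fin 3 → ℂ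

namespace MyG

variable {A B C D : ℂ} {e r : ℝ} {h : e = 0 ∨ e = 1}

instance : AddCommGroup (MyG A B C D e r h) := inferInstanceAs (AddCommGroup (Fin 3 → ℂ))
instance : Module ℝ (MyG A B C D e r h) := inferInstanceAs (Module ℝ (Fin 3 → ℂ))

def c1 (e : ℝ) (x y : Fin 3 → ℂ) : ℂ := -((e : ℂ) * (x 0 * K (y 0) - y 0 * K (x 0)))

def c2 (A B C D : ℂ) (e r : ℝ) (x y : Fin 3 → ℂ) : ℂ :=
  -((r : ℂ) * (x 0 * y 1 - y 0 * x 1)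
      + ((1 - e : ℝ) : ℂ) * A * (x 0 * K (y 0) - y 0 * K (x 0))
      + B * (x 0 * K (y 1) - y 0 * K (x 1))
      + C * (x 1 * K (y 0) - y 1 * K (x 0))
      + ((1 - e : ℝ) : ℂ) * D * (x 1 * K (y 1) - y 1 * K (x 1)))

def lb (A B C D : ℂ) (e r : ℝ) (x y : Fin 3 → ℂ) (k : Fin 3) : ℂ :=
  if k = 1 then c1 e x y else if k = 2 then c2 A B C D e r x y else 0

lemma lb0 (x y : Fin 3 → ℂ) : lb A B C D e r x y 0 = 0 := rfl
lemma lb1 (x y : Fin 3 → ℂ) : lb A B C D e r x y 1 = c1 e x y := rfl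
lemma lb2 (x y : Fin 3 → ℂ) : lb A B C D e r x y 2 = c2 A B C D e r x y := rfl

lemma ext3 {x y : Fin 3 → ℂ} (h0 : x 0 = y 0) (h1 : x 1 = y 1) (h2 : x 2 = y 2) : x = y := by
  funext k; fin_cases k <;> assumption

lemma addap (x y : MyG A B C D e r h) (k : Fin 3) : (x + y) k = x k + y k := rfl
lemma smulap (t : ℝ) (x : MyG A B C D e r h) (k : Fin 3) : (t • x) k = (t : ℂ) * x k := by
  show t • (x k) = _ ; rw [Complex.real_smul]
lemma negap (x : MyG A B C D e r h) (k : Fin 3) : (-x) k = -(x k) := rfl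

instance : LieRing (MyG A B C D e r h) where
  bracket x y := lb A B C D e r x y
  add_lie x y z := ext3
    (by simp [lb0, addap])
    (by simp only [lb1, addap, c1, map_add]; ring)
    (by simp only [lb2, addap, c2, map_add]; ring)
  lie_add x y z := ext3
    (by simp [lb0, addap])
    (by simp only [lb1, addap, c1, map_add]; ring)
    (by simp only [lb2, addap, c2, map_add]; ring)
  lie_self x := ext3
    (by simp [lb0])
    (by show c1 e x x = (0:MyG A B C D e r h) 1; simp [c1])
    (by show c2 A B C D e r x x = (0:MyG A B C D e r h) 2; simp [c2])
  leibniz_lie x y z := by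
    refine ext3 ?_ ?_ ?_
    · simp [lb0, addap]
    · show c1 e x (lb A B C D e r y z) = c1 e (lb A B C D e r x y) z + c1 e y (lb A B C D e r x z)
      simp only [c1, lb0, map_zero]; ring
    · show c2 A B C D e r x (lb A B C D e r y z)
        = c2 A B C D e r (lb A B C D e r x y) z + c2 A B C D e r y (lb A B C D e r x z)
      simp only [c2, lb0, lb1, c1, map_zero, map_neg, map_mul, map_sub, Complex.conj_conj,
        Complex.conj_ofReal]
      rcases h with rfl | rfl <;> push_cast <;> ring

instance : LieAlgebra ℝ (MyG A B C D e r h) where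
  lie_smul t x y := ext3
    (by show lb A B C D e r x (t • y) 0 = (t • (⁅x,y⁆ : MyG A B C D e r h)) 0
        rw [smulap, lb0]; show _ = _ * lb A B C D e r x y 0; rw [lb0, mul_zero])
    (by show c1 e x (t • y) = (t • (⁅x,y⁆ : MyG A B C D e r h)) 1
        rw [smulap]; show _ = _ * c1 e x y
        simp only [c1, smulap, map_mul, Complex.conj_ofReal]; ring)
    (by show c2 A B C D e r x (t • y) = (t • (⁅x,y⁆ : MyG A B C D e r h)) 2
        rw [smulap]; show _ = _ * c2 A B C D e r x y
        simp only [c2, smulap, map_mul, Complex.conj_ofReal]; ring)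

lemma lie_def (x y : MyG A B C D e r h) : ⁅x, y⁆ = lb A B C D e r x y := rfl

/-- The complex structure: multiplication by I. -/
def Jm : MyG A B C D e r h →ₗ[ℝ] MyG A B C D e r h where
  toFun x := fun k => Complex.I * x k
  map_add' x y := by
    funext k
    show Complex.I * ((x + y) k) = Complex.I * x k + Complex.I * y k
    rw [addap]; ring
  map_smul' t x := by
    funext k
    show Complex.I * (t • x k) = t • (Complex.I * x k)
    simp [Complex.real_smul]; ring

lemma Jm_apply (x : MyG A B C D e r h) (k : Fin 3) : Jm x k = Complex.I * x k := rfl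

/-- The (1,0)-forms: coordinate projections. -/
def om (k : Fin 3) : MyG A B C D e r h →ₗ[ℝ] ℂ where
  toFun x := x k
  map_add' x y := rfl
  map_smul' t x := by show t • x k = _; rfl

lemma om_apply (k : Fin 3) (x : MyG A B C D e r h) : om k x = x k := rfl

/-- basis vectors -/
def ev (j : Fin 3) : MyG A B C D e r h := (Pi.single j 1 : Fin 3 → ℂ)

lemma ev_apply (j k : Fin 3) :
    (ev (A := A) (B := B) (C := C) (D := D) (e := e) (r := r) (h := h) j) k
      = if k = j then 1 else 0 := Pi.single_apply j 1 k

end MyG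

section Generic

variable {g : Type*} [LieRing g] [LieAlgebra ℝ g] (J : g →ₗ[ℝ] g)
  (ω : Fin 3 → (g →ₗ[ℝ] ℂ))

/-- points are separated by the (1,0) basis. -/
lemma inj_of_basis (hJ : ∀ x, J (J x) = -x) (hb : IsOneZeroBasis J ω)
    (x : g) (hx : ∀ k, ω k x = 0) : x = 0 := by
  rw [← (Module.forall_dual_apply_eq_zero_iff ℝ x)]
  intro f
  set η : g →ₗ[ℝ] ℂ :=
    Complex.ofRealAm.toLinearMap.comp f - Complex.I • (Complex.ofRealAm.toLinearMap.comp (f.comp J)) with hηdef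
  have hη10 : IsOneZero J η := by
    intro y
    simp only [hηdef, LinearMap.sub_apply, LinearMap.smul_apply, LinearMap.comp_apply,
      AlgHom.toLinearMap_apply, Complex.ofRealAm_coe, hJ y, map_neg, smul_eq_mul]

    linear_combination (↑(f (J y)) : ℂ) * Complex.I_mul_I
  obtain ⟨c, hc⟩ := (Submodule.mem_span_range_iff_exists_fun ℂ).mp (hb.2.2 η hη10)
  have hev := LinearMap.congr_fun hc x
  simp only [LinearMap.sum_apply, LinearMap.add_apply, LinearMap.smul_apply,
    Fin.sum_univ_three, hx, smul_zero, add_zero, zero_add, hηdef, LinearMap.sub_apply, LinearMap.comp_apply,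
    AlgHom.toLinearMap_apply, Complex.ofRealAm_coe] at hev
  have := congrArg Complex.re hev.symm
  simpa using this

end Generic

section Generic2

variable {g : Type*} [LieRing g] [LieAlgebra ℝ g] {J : g →ₗ[ℝ] g}
  {ω : Fin 3 → (g →ₗ[ℝ] ℂ)} {A B C D : ℂ} {ε ρ : ℝ}

lemma eq1N (heq : NilpEqs ω A B C D ε ρ) (x y : g) :
    ω 1 ⁅x,y⁆ = -((ε:ℂ) * (ω 0 x * K (ω 0 y) - ω 0 y * K (ω 0 x))) := by
  have h := heq.2.1 x y
  unfold wC cg at h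
  linear_combination -h

lemma eq2N (heq : NilpEqs ω A B C D ε ρ) (x y : g) :
    ω 2 ⁅x,y⁆ = -((ρ:ℂ) * (ω 0 x * ω 1 y - ω 0 y * ω 1 x)
      + ((1-ε:ℝ):ℂ) * A * (ω 0 x * K (ω 0 y) - ω 0 y * K (ω 0 x))
      + B * (ω 0 x * K (ω 1 y) - ω 0 y * K (ω 1 x))
      + C * (ω 1 x * K (ω 0 y) - ω 1 y * K (ω 0 x))
      + ((1-ε:ℝ):ℂ) * D * (ω 1 x * K (ω 1 y) - ω 1 y * K (ω 1 x))) := by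
  have h := heq.2.2 x y
  unfold wC cg at h
  linear_combination -h

lemma om1_lie (heq : NilpEqs ω A B C D ε ρ) {x : g} (h0 : ω 0 x = 0) (y : g) :
    ω 1 ⁅x,y⁆ = 0 := by rw [eq1N heq, h0]; simp

lemma om2_lie (heq : NilpEqs ω A B C D ε ρ) {x : g} (h0 : ω 0 x = 0) (h1 : ω 1 x = 0)
    (y : g) : ω 2 ⁅x,y⁆ = 0 := by rw [eq2N heq, h0, h1]; simp

lemma lie_eq_zeroN (hJ : ∀ x, J (J x) = -x) (hb : IsOneZeroBasis J ω)
    (heq : NilpEqs ω A B C D ε ρ) {x : g} (h0 : ω 0 x = 0) (h1 : ω 1 x = 0) (y : g) :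
    ⁅x,y⁆ = 0 := by
  refine inj_of_basis J ω hJ hb _ (fun k => ?_)
  fin_cases k
  · exact heq.1 x y
  · exact om1_lie heq h0 y
  · exact om2_lie heq h0 h1 y

end Generic2

/-- the reduced nilpotent equations are admissible, and any Lie
algebra carrying them is nilpotent (in step at most 3) with `J` an integrable
nilpotent complex structure. -/
theorem nilpotent_equations_admissible (A B C D : ℂ) (ε ρ : ℝ)
    (hε : ε = 0 ∨ ε = 1) (hρ : ρ = 0 ∨ ρ = 1) :
    (∃ (G : BundledLieAlg) (J : G.carrier →ₗ[ℝ] G.carrier)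
        (ω : Fin 3 → (G.carrier →ₗ[ℝ] ℂ)),
      Module.finrank ℝ G.carrier = 6 ∧ (∀ x, J (J x) = -x) ∧
      IsOneZeroBasis J ω ∧ NilpEqs ω A B C D ε ρ) ∧
    (∀ (g : Type*) [LieRing g] [LieAlgebra ℝ g], ∀ (J : g →ₗ[ℝ] g)
        (ω : Fin 3 → (g →ₗ[ℝ] ℂ)),
      Module.finrank ℝ g = 6 → (∀ x, J (J x) = -x) →
      IsOneZeroBasis J ω → NilpEqs ω A B C D ε ρ →
      lcs g 3 = ⊥ ∧ IsComplexStructure J ∧ IsNilpotentJ J) := by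
  constructor
  · refine ⟨⟨MyG A B C D ε ρ hε⟩, MyG.Jm, MyG.om, ?_, ?_, ?_, ?_⟩
    · show Module.finrank ℝ (Fin 3 → ℂ) = 6
      simp [Module.finrank_pi_fintype, Complex.finrank_real_complex]
    · intro x
      funext k
      show Complex.I * (Complex.I * x k) = -(x k)
      rw [← mul_assoc, Complex.I_mul_I, neg_one_mul]
    · refine ⟨fun k x => rfl, ?_, ?_⟩
      · rw [Fintype.linearIndependent_iff]
        intro c hc i
        have h := LinearMap.congr_fun hc (MyG.ev i : MyG A B C D ε ρ hε)
        fin_cases i <;>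
          simpa [LinearMap.sum_apply, LinearMap.add_apply, LinearMap.smul_apply,
            Fin.sum_univ_three, MyG.om_apply, MyG.ev_apply, smul_eq_mul] using h
      · intro η hη
        let ev' : Fin 3 → MyG A B C D ε ρ hε := MyG.ev
        rw [Submodule.mem_span_range_iff_exists_fun]
        refine ⟨fun i => η (ev' i), ?_⟩
        apply LinearMap.ext
        intro x
        have hx : x = (x 0).re • ev' 0 + (x 0).im • MyG.Jm (ev' 0)
            + (x 1).re • ev' 1 + (x 1).im • MyG.Jm (ev' 1)
            + (x 2).re • ev' 2 + (x 2).im • MyG.Jm (ev' 2) := by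
          refine MyG.ext3 ?_ ?_ ?_ <;>
          · simp [ev', MyG.addap, MyG.smulap, MyG.Jm_apply, MyG.ev_apply, mul_comm]
            rw [mul_comm]
            exact (Complex.re_add_im _).symm
        conv_rhs => rw [hx]
        simp only [map_add, LinearMap.map_smul, hη _, LinearMap.sum_apply,
          LinearMap.smul_apply, Fin.sum_univ_three, MyG.om_apply, smul_eq_mul]
        have hre : ∀ z : ℂ, (z.re : ℂ) + (z.im : ℂ) * Complex.I = z :=
          fun z => Complex.re_add_im z
        simp only [LinearMap.add_apply, LinearMap.smul_apply, MyG.om_apply, smul_eq_mul,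
          Complex.real_smul]
        linear_combination (-(η (ev' 0))) * hre (x 0) - η (ev' 1) * hre (x 1)
          - η (ev' 2) * hre (x 2)
    · refine ⟨fun x y => rfl, fun x y => ?_, fun x y => ?_⟩
      · show -(MyG.lb A B C D ε ρ x y 1) = _
        rw [MyG.lb1]
        unfold MyG.c1 wC cg
        simp only [MyG.om_apply]
        ring
      · show -(MyG.lb A B C D ε ρ x y 2) = _
        rw [MyG.lb2]
        unfold MyG.c2 wC cg
        simp only [MyG.om_apply]
        ring
  · intro g _ _ J ω h6 hJ hb heq
    have hone : ∀ (k : Fin 3) (z : g), ω k (J z) = Complex.I * ω k z := fun k z => hb.1 k z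
    -- lcs g 3 = ⊥
    have hl1 : lcs g 1 ≤ LinearMap.ker (ω 0) := by
      show Submodule.span ℝ _ ≤ _
      rw [Submodule.span_le]
      rintro z ⟨x, -, y, rfl⟩
      exact heq.1 x y
    have hl2 : lcs g 2 ≤ LinearMap.ker (ω 0) ⊓ LinearMap.ker (ω 1) := by
      show Submodule.span ℝ _ ≤ _
      rw [Submodule.span_le]
      rintro z ⟨x, hx, y, rfl⟩
      have h0 : ω 0 x = 0 := hl1 hx
      exact ⟨heq.1 x y, om1_lie heq h0 y⟩
    have hl3 : lcs g 3 = ⊥ := by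
      rw [eq_bot_iff]
      show Submodule.span ℝ _ ≤ _
      rw [Submodule.span_le]
      rintro z ⟨x, hx, y, rfl⟩
      have h0 : ω 0 x = 0 := (hl2 hx).1
      have h1 : ω 1 x = 0 := (hl2 hx).2
      simp [lie_eq_zeroN hJ hb heq h0 h1 y]
    refine ⟨hl3, ⟨hJ, fun x y => ?_⟩, ?_⟩
    -- integrability
    · have hN : ∀ k, ω k (⁅J x, J y⁆ - (J ⁅J x, y⁆ + J ⁅x, J y⁆ + ⁅x, y⁆)) = 0 := by
        have hN0 : ω 0 (⁅J x, J y⁆ - (J ⁅J x, y⁆ + J ⁅x, J y⁆ + ⁅x, y⁆)) = 0 := by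
          simp only [map_sub, map_add, hone 0, heq.1]
          ring
        have hN1 : ω 1 (⁅J x, J y⁆ - (J ⁅J x, y⁆ + J ⁅x, J y⁆ + ⁅x, y⁆)) = 0 := by
          simp only [map_sub, map_add, hone 1, eq1N heq, hone 0, map_mul, Complex.conj_I]
          ring_nf
          simp only [Complex.I_sq]
          ring
        have hN2 : ω 2 (⁅J x, J y⁆ - (J ⁅J x, y⁆ + J ⁅x, J y⁆ + ⁅x, y⁆)) = 0 := by
          simp only [map_sub, map_add, hone 2, eq2N heq, hone 0, hone 1, map_mul,
            Complex.conj_I]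
          ring_nf
          simp only [Complex.I_sq]
          ring
        intro k
        fin_cases k
        · exact hN0
        · exact hN1
        · exact hN2
      have := inj_of_basis J ω hJ hb _ hN
      rw [sub_eq_zero] at this
      exact this
    -- nilpotent J
    · refine ⟨3, Set.eq_univ_iff_forall.mpr fun x => ?_⟩
      have asc1 : ∀ z : g, ω 0 z = 0 → ω 1 z = 0 → z ∈ ascSeries J 1 := by
        intro z h0 h1
        refine ⟨fun y => ?_, fun y => ?_⟩
        · simp [ascSeries, lie_eq_zeroN hJ hb heq h0 h1 y]
        · have h0J : ω 0 (J z) = 0 := by rw [hone 0, h0, mul_zero]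
          have h1J : ω 1 (J z) = 0 := by rw [hone 1, h1, mul_zero]
          simp [ascSeries, lie_eq_zeroN hJ hb heq h0J h1J y]
      have asc2 : ∀ z : g, ω 0 z = 0 → z ∈ ascSeries J 2 := by
        intro z h0
        have h0J : ω 0 (J z) = 0 := by rw [hone 0, h0, mul_zero]
        exact ⟨fun y => asc1 _ (heq.1 z y) (om1_lie heq h0 y),
          fun y => asc1 _ (heq.1 (J z) y) (om1_lie heq h0J y)⟩
      exact ⟨fun y => asc2 _ (heq.1 x y), fun y => asc2 _ (heq.1 (J x) y)⟩

end
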